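/- Let V be a finite-dimensional real inner product space, A a symmetric endomorphism of V with ‖A‖² := Tr(A∘A), and S a skew-symmetric endomorphism of V with ρ = −Tr(S²). Then −Tr(A²∘S²) ≤ ‖A‖²·ρ. -/

import Mathlib

/-!
In an orthonormal basis `b`, `Tr(T† T) = ∑ ‖T bᵢ‖²` is the squared Hilbert–Schmidt norm, and it
dominates the squared operator norm. Hence the Hilbert–Schmidt norm is submultiplicative:
`Tr((TU)† TU) = ∑ ‖T (U bᵢ)‖² ≤ Tr(T† T) ∑ ‖U bᵢ‖²`. With `A† = A` and `S† = -S`, cyclicity of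
the trace gives `Tr((AS)† AS) = -Tr(A² S²)`, `Tr(A† A) = ‖A‖²` and `Tr(S† S) = ρ`.
-/

open scoped InnerProductSpace

namespace LinearMap

variable {V W U : Type*}
  [NormedAddCommGroup V] [InnerProductSpace ℝ V] [FiniteDimensional ℝ V]
  [NormedAddCommGroup W] [InnerProductSpace ℝ W] [FiniteDimensional ℝ W]
  [NormedAddCommGroup U] [InnerProductSpace ℝ U] [FiniteDimensional ℝ U]

theorem trace_adjoint_comp_self_eq_sum_norm_sq {ι : Type*} [Fintype ι] (T : V →ₗ[ℝ] W)
    (b : OrthonormalBasis ι ℝ V) :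
    trace ℝ V (adjoint T ∘ₗ T) = ∑ i, ‖T (b i)‖ ^ 2 := by
  rw [trace_eq_sum_inner _ b]
  refine Finset.sum_congr rfl fun i _ => ?_
  rw [comp_apply, adjoint_inner_right, real_inner_self_eq_norm_sq]

theorem norm_sq_apply_le_trace_adjoint_comp_self (T : V →ₗ[ℝ] W) (x : V) :
    ‖T x‖ ^ 2 ≤ trace ℝ V (adjoint T ∘ₗ T) * ‖x‖ ^ 2 := by
  set c := stdOrthonormalBasis ℝ W
  have htrace : trace ℝ V (adjoint T ∘ₗ T) = ∑ j, ‖adjoint T (c j)‖ ^ 2 := by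
    rw [trace_comp_comm', ← trace_adjoint_comp_self_eq_sum_norm_sq (adjoint T) c,
      adjoint_adjoint]
  calc ‖T x‖ ^ 2 = ∑ j, ⟪adjoint T (c j), x⟫_ℝ ^ 2 := by
        rw [← real_inner_self_eq_norm_sq, ← c.sum_inner_mul_inner (T x) (T x)]
        refine Finset.sum_congr rfl fun j _ => ?_
        rw [real_inner_comm _ (T x), adjoint_inner_left, sq]
    _ ≤ ∑ j, ‖adjoint T (c j)‖ ^ 2 * ‖x‖ ^ 2 := by
        gcongr with j
        rw [← mul_pow, ← sq_abs]
        gcongr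
        exact abs_real_inner_le_norm _ _
    _ = trace ℝ V (adjoint T ∘ₗ T) * ‖x‖ ^ 2 := by rw [htrace, Finset.sum_mul]

theorem trace_adjoint_comp_le_mul (T : W →ₗ[ℝ] U) (S : V →ₗ[ℝ] W) :
    trace ℝ V (adjoint (T ∘ₗ S) ∘ₗ (T ∘ₗ S)) ≤
      trace ℝ W (adjoint T ∘ₗ T) * trace ℝ V (adjoint S ∘ₗ S) := by
  set b := stdOrthonormalBasis ℝ V
  rw [trace_adjoint_comp_self_eq_sum_norm_sq _ b, trace_adjoint_comp_self_eq_sum_norm_sq S b,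
    Finset.mul_sum]
  exact Finset.sum_le_sum fun i _ => norm_sq_apply_le_trace_adjoint_comp_self T (S (b i))

end LinearMap

theorem stmt_6 {V : Type*} [NormedAddCommGroup V] [InnerProductSpace ℝ V]
    [FiniteDimensional ℝ V] (A S : V →ₗ[ℝ] V)
    (hA : LinearMap.IsSymmetric A) (hS : LinearMap.adjoint S = -S) :
    -(LinearMap.trace ℝ V ((A ∘ₗ A) ∘ₗ (S ∘ₗ S))) ≤
      LinearMap.trace ℝ V (A ∘ₗ A) * (-(LinearMap.trace ℝ V (S ∘ₗ S))) := by
  have hAS : LinearMap.trace ℝ V (LinearMap.adjoint (A ∘ₗ S) ∘ₗ (A ∘ₗ S)) =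
      -LinearMap.trace ℝ V ((A ∘ₗ A) ∘ₗ (S ∘ₗ S)) := by
    rw [LinearMap.adjoint_comp, hA.adjoint_eq, hS, LinearMap.neg_comp, LinearMap.neg_comp,
      map_neg, LinearMap.comp_assoc, LinearMap.trace_comp_comm' (A ∘ₗ A ∘ₗ S) S]
    simp only [LinearMap.comp_assoc]
  have hSS : LinearMap.trace ℝ V (LinearMap.adjoint S ∘ₗ S) = -LinearMap.trace ℝ V (S ∘ₗ S) := by
    rw [hS, LinearMap.neg_comp, map_neg]
  simpa only [hAS, hSS, hA.adjoint_eq] using LinearMap.trace_adjoint_comp_le_mul A S
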